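/- arXiv:1912.04212 — 4 statements merged into one kernel-verified Lean document; each statement's English description precedes it below -/
import Mathlib

section
/- Let α ∈ (0,1). Then (1/α)·JS_α(q‖p) ≤ −KL(q‖p) + log c − log(1−α) − ((1−α)/α)·log(1−α) + ((1−α)/α)·KL(p‖q) − ∫ q(z)·log ℓ(z) dμ(z) + KL(q‖π). -/
open MeasureTheory

/-- Kullback–Leibler divergence between two densities with respect to `μ`. -/
noncomputable def KLdiv {Z : Type*} [MeasurableSpace Z] (μ : Measure Z) (f g : Z → ℝ) : ℝ :=
  ∫ z, f z * Real.log (f z / g z) ∂μ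

/-- Skew Jensen–Shannon divergence `JS_α(f‖g)`. -/
noncomputable def JSdiv {Z : Type*} [MeasurableSpace Z] (μ : Measure Z) (α : ℝ)
    (f g : Z → ℝ) : ℝ :=
  α * KLdiv μ f (fun z => (1 - α) * f z + α * g z)
    + (1 - α) * KLdiv μ g (fun z => (1 - α) * f z + α * g z)

/-- Corollary 1 of the UQ-VAE paper: the implementable upper bound
`(1/α)·JS_α(q‖p) ≤ −KL(q‖p) + log c − log(1−α) − ((1−α)/α)·log(1−α)
  + ((1−α)/α)·KL(p‖q) − E_q[log ℓ] + KL(q‖π)`,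
where `c·p = ℓ·π` a.e. (likelihood times prior equals evidence times posterior). -/
theorem jensen_shannon_upper_bound {Z : Type*} [MeasurableSpace Z] (μ : Measure Z)
    [SigmaFinite μ] (q p pri : Z → ℝ) (ℓ : Z → ℝ)
    (hqm : Measurable q) (hpm : Measurable p) (hprim : Measurable pri) (hℓm : Measurable ℓ)
    (hqpos : ∀ᵐ z ∂μ, 0 < q z) (hppos : ∀ᵐ z ∂μ, 0 < p z) (hpripos : ∀ᵐ z ∂μ, 0 < pri z)
    (hℓpos : ∀ z, 0 < ℓ z)
    (hq1 : ∫ z, q z ∂μ = 1) (hp1 : ∫ z, p z ∂μ = 1) (hpri1 : ∫ z, pri z ∂μ = 1)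
    (c : ℝ) (hc : 0 < c) (hbayes : ∀ᵐ z ∂μ, c * p z = ℓ z * pri z)
    (α : ℝ) (hα : α ∈ Set.Ioo (0 : ℝ) 1)
    (hint1 : Integrable (fun z => q z * Real.log (q z / ((1 - α) * q z + α * p z))) μ)
    (hint2 : Integrable (fun z => p z * Real.log (p z / ((1 - α) * q z + α * p z))) μ)
    (hintqp : Integrable (fun z => q z * Real.log (q z / p z)) μ)
    (hintpq : Integrable (fun z => p z * Real.log (p z / q z)) μ)
    (hintqpri : Integrable (fun z => q z * Real.log (q z / pri z)) μ)
    (hintℓ : Integrable (fun z => q z * Real.log (ℓ z)) μ) :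
    (1 / α) * JSdiv μ α q p
      ≤ -KLdiv μ q p + Real.log c - Real.log (1 - α)
        - ((1 - α) / α) * Real.log (1 - α)
        + ((1 - α) / α) * KLdiv μ p q
        - ∫ z, q z * Real.log (ℓ z) ∂μ
        + KLdiv μ q pri := by

  obtain ⟨hα0, hα1⟩ := hα
  have h1α : (0:ℝ) < 1 - α := by linarith
  have hqint : Integrable q μ := by
    by_contra h; rw [integral_undef h] at hq1; norm_num at hq1
  have hpint : Integrable p μ := by
    by_contra h; rw [integral_undef h] at hp1; norm_num at hp1
  -- Bound A : KL(q‖m) ≤ -log(1-α)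
  have hA : KLdiv μ q (fun z => (1 - α) * q z + α * p z) ≤ -Real.log (1 - α) := by
    have hle : ∀ᵐ z ∂μ, q z * Real.log (q z / ((1 - α) * q z + α * p z))
        ≤ q z * (-Real.log (1 - α)) := by
      filter_upwards [hqpos, hppos] with z hq hp
      have hmpos : 0 < (1 - α) * q z + α * p z := by nlinarith
      have hdivpos : 0 < q z / ((1 - α) * q z + α * p z) := div_pos hq hmpos
      have h2 : q z / ((1 - α) * q z + α * p z) ≤ 1 / (1 - α) := by
        rw [div_le_div_iff₀ hmpos h1α]; nlinarith
      have h3 : Real.log (q z / ((1 - α) * q z + α * p z)) ≤ Real.log (1 / (1 - α)) :=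
        Real.log_le_log hdivpos h2
      rw [Real.log_div one_ne_zero (ne_of_gt h1α), Real.log_one, zero_sub] at h3
      exact mul_le_mul_of_nonneg_left h3 hq.le
    have := integral_mono_ae hint1 (hqint.mul_const (-Real.log (1 - α))) hle
    rw [integral_mul_const, hq1, one_mul] at this
    exact this
  -- Bound B : KL(p‖m) ≤ KL(p‖q) - log(1-α)
  have hB : KLdiv μ p (fun z => (1 - α) * q z + α * p z)
      ≤ KLdiv μ p q - Real.log (1 - α) := by
    have hle : ∀ᵐ z ∂μ, p z * Real.log (p z / ((1 - α) * q z + α * p z))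
        ≤ p z * Real.log (p z / q z) - p z * Real.log (1 - α) := by
      filter_upwards [hqpos, hppos] with z hq hp
      have hmpos : 0 < (1 - α) * q z + α * p z := by nlinarith
      have hdivpos : 0 < p z / ((1 - α) * q z + α * p z) := div_pos hp hmpos
      have h2 : p z / ((1 - α) * q z + α * p z) ≤ p z / ((1 - α) * q z) := by
        apply div_le_div_of_nonneg_left hp.le (by positivity); nlinarith
      have h3 : Real.log (p z / ((1 - α) * q z + α * p z))
          ≤ Real.log (p z / ((1 - α) * q z)) := Real.log_le_log hdivpos h2
      have h4 : Real.log (p z / ((1 - α) * q z))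
          = Real.log (p z / q z) - Real.log (1 - α) := by
        rw [Real.log_div (ne_of_gt hp) (by positivity),
            Real.log_div (ne_of_gt hp) (ne_of_gt hq),
            Real.log_mul (ne_of_gt h1α) (ne_of_gt hq)]
        ring
      rw [h4] at h3
      calc p z * Real.log (p z / ((1 - α) * q z + α * p z))
          ≤ p z * (Real.log (p z / q z) - Real.log (1 - α)) :=
            mul_le_mul_of_nonneg_left h3 hp.le
        _ = p z * Real.log (p z / q z) - p z * Real.log (1 - α) := by ring
    have := integral_mono_ae hint2 (hintpq.sub (hpint.mul_const (Real.log (1 - α)))) hle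
    simp only [Pi.sub_apply] at this
    rw [integral_sub hintpq (hpint.mul_const (Real.log (1 - α))),
        integral_mul_const, hp1, one_mul] at this
    exact this
  -- Identity : KL(q‖π) = KL(q‖p) + ∫ q log ℓ - log c
  have hC : KLdiv μ q pri
      = KLdiv μ q p + (∫ z, q z * Real.log (ℓ z) ∂μ) - Real.log c := by
    have heq : ∀ᵐ z ∂μ, q z * Real.log (q z / pri z)
        = q z * Real.log (q z / p z) + q z * Real.log (ℓ z) - q z * Real.log c := by
      filter_upwards [hqpos, hppos, hpripos, hbayes] with z hq hp hpri hb
      have hlog : Real.log c + Real.log (p z) = Real.log (ℓ z) + Real.log (pri z) := by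
        rw [← Real.log_mul (ne_of_gt hc) (ne_of_gt hp),
            ← Real.log_mul (ne_of_gt (hℓpos z)) (ne_of_gt hpri), hb]
      rw [Real.log_div (ne_of_gt hq) (ne_of_gt hpri),
          Real.log_div (ne_of_gt hq) (ne_of_gt hp)]
      nlinarith [hlog]
    have h1 : KLdiv μ q pri
        = ∫ z, (q z * Real.log (q z / p z) + q z * Real.log (ℓ z) - q z * Real.log c) ∂μ :=
      integral_congr_ae heq
    rw [KLdiv] at h1 ⊢
    rw [h1]
    have h2 : (∫ z, (q z * Real.log (q z / p z) + q z * Real.log (ℓ z)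
        - q z * Real.log c) ∂μ)
        = (∫ z, (q z * Real.log (q z / p z) + q z * Real.log (ℓ z)) ∂μ)
          - ∫ z, q z * Real.log c ∂μ :=
      integral_sub (hintqp.add hintℓ) (hqint.mul_const (Real.log c))
    rw [h2, integral_add hintqp hintℓ, integral_mul_const, hq1, one_mul]
    rfl
  -- combine
  have hαne : α ≠ 0 := ne_of_gt hα0
  have hfrac : 0 ≤ (1 - α) / α := by positivity
  have hmul := mul_le_mul_of_nonneg_left hB hfrac
  rw [JSdiv]
  have hexp : (1 / α) * (α * KLdiv μ q (fun z => (1 - α) * q z + α * p z)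
      + (1 - α) * KLdiv μ p (fun z => (1 - α) * q z + α * p z))
      = KLdiv μ q (fun z => (1 - α) * q z + α * p z)
        + ((1 - α) / α) * KLdiv μ p (fun z => (1 - α) * q z + α * p z) := by
    field_simp
  rw [hexp]
  nlinarith [hA, hmul, hC]
end

section
/- Let α ∈ (0,1) and let L_α = ((1−α)/α)·∫ p(z)·log(α + (1−α)·q(z)/p(z)) dμ(z) + ∫ q(z)·log(j(z)/q(z)) dμ(z). Then −L_α ≤ −((1−α)/α)·log(1−α) + ((1−α)/α)·KL(p‖q) − ∫ q(z)·log ℓ(z) dμ(z) + KL(q‖π). -/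
open MeasureTheory

/-- Upper bound on `−L_α`:
`−L_α ≤ −((1−α)/α)·log(1−α) + ((1−α)/α)·KL(p‖q) − E_q[log ℓ] + KL(q‖π)`,
where `L_α = ((1−α)/α)·E_p[log(α+(1−α)q/p)] + E_q[log(j/q)]` with joint density
`j = c·p` and `c·p = ℓ·π` a.e. -/
theorem neg_L_alpha_upper_bound {Z : Type*} [MeasurableSpace Z] (μ : Measure Z)
    [SigmaFinite μ] (q p pri : Z → ℝ) (ℓ : Z → ℝ)
    (hqm : Measurable q) (hpm : Measurable p) (hprim : Measurable pri) (hℓm : Measurable ℓ)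
    (hqpos : ∀ᵐ z ∂μ, 0 < q z) (hppos : ∀ᵐ z ∂μ, 0 < p z) (hpripos : ∀ᵐ z ∂μ, 0 < pri z)
    (hℓpos : ∀ z, 0 < ℓ z)
    (hq1 : ∫ z, q z ∂μ = 1) (hp1 : ∫ z, p z ∂μ = 1) (hpri1 : ∫ z, pri z ∂μ = 1)
    (c : ℝ) (hc : 0 < c) (hbayes : ∀ᵐ z ∂μ, c * p z = ℓ z * pri z)
    (α : ℝ) (hα : α ∈ Set.Ioo (0 : ℝ) 1)
    (hint4 : Integrable (fun z => p z * Real.log (α + (1 - α) * q z / p z)) μ)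
    (hint5 : Integrable (fun z => q z * Real.log (c * p z / q z)) μ)
    (hintpq : Integrable (fun z => p z * Real.log (p z / q z)) μ)
    (hintqpri : Integrable (fun z => q z * Real.log (q z / pri z)) μ)
    (hintℓ : Integrable (fun z => q z * Real.log (ℓ z)) μ) :
    -(((1 - α) / α) * ∫ z, p z * Real.log (α + (1 - α) * q z / p z) ∂μ
        + ∫ z, q z * Real.log (c * p z / q z) ∂μ)
      ≤ -(((1 - α) / α) * Real.log (1 - α))
        + ((1 - α) / α) * KLdiv μ p q
        - ∫ z, q z * Real.log (ℓ z) ∂μ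
        + KLdiv μ q pri := by
  obtain ⟨hα0, hα1⟩ := hα
  have hβ : (0:ℝ) < (1 - α) / α := div_pos (by linarith) hα0
  have hpint : Integrable p μ := by
    by_contra h
    rw [integral_undef h] at hp1; norm_num at hp1
  -- equality for the second integral
  have heq : ∫ z, q z * Real.log (c * p z / q z) ∂μ
      = (∫ z, q z * Real.log (ℓ z) ∂μ) - KLdiv μ q pri := by
    rw [KLdiv, ← integral_sub hintℓ hintqpri]
    apply integral_congr_ae
    filter_upwards [hqpos, hpripos, hbayes] with z hq hpri hb
    have hℓ := hℓpos z
    rw [hb, Real.log_div (by positivity) hq.ne', Real.log_mul hℓ.ne' hpri.ne',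
      Real.log_div hq.ne' hpri.ne']
    ring
  -- inequality for the first integral
  have hkey : Real.log (1 - α) - KLdiv μ p q
      ≤ ∫ z, p z * Real.log (α + (1 - α) * q z / p z) ∂μ := by
    have hmono : ∫ z, (Real.log (1 - α) * p z - p z * Real.log (p z / q z)) ∂μ
        ≤ ∫ z, p z * Real.log (α + (1 - α) * q z / p z) ∂μ := by
      apply integral_mono_ae ((hpint.const_mul _).sub hintpq) hint4
      filter_upwards [hqpos, hppos] with z hq hp
      simp only [Pi.sub_apply]
      have h1 : Real.log (1 - α) * p z - p z * Real.log (p z / q z)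
          = p z * Real.log ((1 - α) * q z / p z) := by
        rw [mul_div_assoc, Real.log_mul (by linarith) (by positivity),
          Real.log_div hq.ne' hp.ne', Real.log_div hp.ne' hq.ne']
        ring
      rw [h1]
      have hle : Real.log ((1 - α) * q z / p z) ≤ Real.log (α + (1 - α) * q z / p z) := by
        apply Real.log_le_log (div_pos (mul_pos (by linarith) hq) hp)
        linarith
      exact mul_le_mul_of_nonneg_left hle hp.le
    rw [integral_sub (hpint.const_mul _) hintpq, integral_const_mul, hp1, mul_one] at hmono
    exact hmono
  have hfin : ((1 - α) / α) * (Real.log (1 - α) - KLdiv μ p q)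
      ≤ ((1 - α) / α) * ∫ z, p z * Real.log (α + (1 - α) * q z / p z) ∂μ :=
    mul_le_mul_of_nonneg_left hkey hβ.le
  rw [heq]
  nlinarith [hfin]
end

section
/- For α = 1/2, define the functional F(μ, Σ) = ((1−α)/α)·( log det Σ + tr(Σ⁻¹ Γ_*) + (μ − μ_*)ᵀ Σ⁻¹ (μ − μ_*) ) + tr(Γ_E⁻¹ B Σ Bᵀ) + (y − Bμ − μ_E)ᵀ Γ_E⁻¹ (y − Bμ − μ_E) + tr(Γ_pr⁻¹ Σ) + (μ − μ_pr)ᵀ Γ_pr⁻¹ (μ − μ_pr) + log(det Γ_pr / det Σ), for μ ∈ ℝⁿ and Σ ∈ ℝⁿˣⁿ symmetric positive definite. Then F attains its minimum over this domain exactly at the point (μ, Σ) = (μ_*, Γ_*); i.e., F(μ, Σ) ≥ F(μ_*, Γ_*) for all admissible (μ, Σ), with equality if and only if μ = μ_* and Σ = Γ_*. -/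
/-!
For `α = 1/2` the coefficient `(1 - α)/α` is `1`, so the two `log det Σ` terms cancel. Completing
the square in `μ` (the posterior mean `μ_*` solves the normal equation of the regularised
least-squares term) and merging `tr(Γ_E⁻¹ B Σ Bᵀ) + tr(Γ_pr⁻¹ Σ) = tr(Γ_*⁻¹ Σ)` shows that `F(μ, Σ)`
is a constant plus twice the Jeffreys divergence between `N(μ, Σ)` and `N(μ_*, Γ_*)`. That
divergence vanishes only when the two Gaussians coincide: for positive definite `Σ, Γ` with
`Σ⁻¹ = Rᴴ R` and `Γ⁻¹ = Qᴴ Q`, `tr(Σ⁻¹ Γ) + tr(Γ⁻¹ Σ) - 2n = tr(Σ⁻¹ (Γ - Σ) Γ⁻¹ (Γ - Σ))` is the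
squared Frobenius norm of `Q (Γ - Σ) Rᴴ`.
-/

open Matrix

namespace Matrix

variable {ι κ : Type*} [Fintype ι] [Fintype κ]

section Quadratic

variable {R : Type*} [CommRing R]

theorem IsSymm.dotProduct_mulVec_comm {A : Matrix ι ι R} (hA : A.IsSymm) (x y : ι → R) :
    x ⬝ᵥ A *ᵥ y = y ⬝ᵥ A *ᵥ x := by
  rw [dotProduct_mulVec, ← hA.eq, vecMul_transpose, dotProduct_comm, hA.eq]

theorem IsSymm.dotProduct_mulVec_add_self {A : Matrix ι ι R} (hA : A.IsSymm) (x u : ι → R) :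
    (x + u) ⬝ᵥ A *ᵥ (x + u) = x ⬝ᵥ A *ᵥ x + 2 * (u ⬝ᵥ A *ᵥ x) + u ⬝ᵥ A *ᵥ u := by
  simp only [mulVec_add, dotProduct_add, add_dotProduct, hA.dotProduct_mulVec_comm x u]
  ring

theorem dotProduct_transpose_mul_mul_mulVec (B : Matrix κ ι R) (E : Matrix κ κ R) (u v : ι → R) :
    u ⬝ᵥ (Bᵀ * E * B) *ᵥ v = (B *ᵥ u) ⬝ᵥ E *ᵥ (B *ᵥ v) := by
  rw [← mulVec_mulVec, ← mulVec_mulVec, dotProduct_transpose_mulVec, dotProduct_comm]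

theorem residual_add_penalty_eq_of_normal_equation {E : Matrix κ κ R} {Λ : Matrix ι ι R}
    (hE : E.IsSymm) (hΛ : Λ.IsSymm) (B : Matrix κ ι R) (r : κ → R) {a ν : ι → R}
    (hν : (Bᵀ * E * B + Λ) *ᵥ ν = Bᵀ *ᵥ (E *ᵥ r) + Λ *ᵥ a) (μ : ι → R) :
    (r - B *ᵥ μ) ⬝ᵥ E *ᵥ (r - B *ᵥ μ) + (μ - a) ⬝ᵥ Λ *ᵥ (μ - a)
      = (μ - ν) ⬝ᵥ (Bᵀ * E * B + Λ) *ᵥ (μ - ν)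
        + ((r - B *ᵥ ν) ⬝ᵥ E *ᵥ (r - B *ᵥ ν) + (ν - a) ⬝ᵥ Λ *ᵥ (ν - a)) := by
  obtain ⟨u, rfl⟩ : ∃ u, μ = ν + u := ⟨μ - ν, by abel⟩
  have hcross : (B *ᵥ u) ⬝ᵥ E *ᵥ (r - B *ᵥ ν) = u ⬝ᵥ Λ *ᵥ (ν - a) := by
    have := congrArg (u ⬝ᵥ ·) hν
    simp only [add_mulVec, dotProduct_add, dotProduct_transpose_mul_mul_mulVec,
      dotProduct_transpose_mulVec, dotProduct_comm (E *ᵥ r)] at this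
    simp only [mulVec_sub, dotProduct_sub]
    linear_combination -this
  have hres : r - B *ᵥ (ν + u) = (r - B *ᵥ ν) + -(B *ᵥ u) := by rw [mulVec_add]; abel
  have hpen : ν + u - a = (ν - a) + u := by abel
  rw [hres, hpen, add_sub_cancel_left, hE.dotProduct_mulVec_add_self,
    hΛ.dotProduct_mulVec_add_self, add_mulVec, dotProduct_add,
    dotProduct_transpose_mul_mul_mulVec]
  simp only [neg_dotProduct, mulVec_neg, dotProduct_neg, neg_neg, hcross]
  ring

theorem trace_mul_mul_mul_transpose_add_trace_mul (E : Matrix κ κ R) (B : Matrix κ ι R)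
    (Λ S : Matrix ι ι R) :
    (E * B * S * Bᵀ).trace + (Λ * S).trace = ((Bᵀ * E * B + Λ) * S).trace := by
  rw [trace_mul_cycle, add_mul, trace_add]
  simp only [Matrix.mul_assoc]

end Quadratic

section TrivialStar

variable {R : Type*} [CommRing R] [PartialOrder R] [StarRing R] [TrivialStar R]

theorem PosDef.dotProduct_mulVec_self_nonneg [IsOrderedRing R] {A : Matrix ι ι R} (hA : A.PosDef)
    (x : ι → R) : 0 ≤ x ⬝ᵥ A *ᵥ x := by
  simpa using hA.posSemidef.dotProduct_mulVec_nonneg x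

theorem PosDef.dotProduct_mulVec_self_eq_zero_iff {A : Matrix ι ι R} (hA : A.PosDef)
    {x : ι → R} : x ⬝ᵥ A *ᵥ x = 0 ↔ x = 0 := by
  refine ⟨fun h => by_contra fun hx => (hA.dotProduct_mulVec_pos hx).ne' ?_, by rintro rfl; simp⟩
  simpa using h

theorem PosDef.transpose_mul_mul_add [IsOrderedRing R] {E : Matrix κ κ R} {Λ : Matrix ι ι R}
    (hE : E.PosDef) (hΛ : Λ.PosDef) (B : Matrix κ ι R) : (Bᵀ * E * B + Λ).PosDef :=
  .posSemidef_add (by simpa using hE.posSemidef.conjTranspose_mul_mul_same B) hΛ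

end TrivialStar

section Trace

theorem trace_inv_mul_add_trace_inv_mul {K : Type*} [Field K] [DecidableEq ι]
    {S P : Matrix ι ι K} (hS : IsUnit S.det) (hP : IsUnit P.det) :
    (S⁻¹ * P).trace + (P⁻¹ * S).trace
      = 2 * Fintype.card ι + (S⁻¹ * (P - S) * P⁻¹ * (P - S)).trace := by
  have hexpand : S⁻¹ * (P - S) * P⁻¹ * (P - S)
      = S⁻¹ * (P * P⁻¹) * P - S⁻¹ * (P * P⁻¹) * S - (S⁻¹ * S) * (P⁻¹ * P)
        + (S⁻¹ * S) * (P⁻¹ * S) := by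
    noncomm_ring
  simp only [hexpand, mul_nonsing_inv P hP, nonsing_inv_mul S hS, nonsing_inv_mul P hP,
    Matrix.mul_one, Matrix.one_mul, trace_add, trace_sub, trace_one]
  ring

open scoped ComplexOrder

variable {𝕜 : Type*} [RCLike 𝕜] [DecidableEq ι]

open scoped MatrixOrder in
theorem PosDef.exists_isUnit_eq_conjTranspose_mul_self {A : Matrix ι ι 𝕜} (hA : A.PosDef) :
    ∃ R : Matrix ι ι 𝕜, IsUnit R ∧ A = Rᴴ * R :=
  CStarAlgebra.isStrictlyPositive_iff_eq_star_mul_self.mp hA.isStrictlyPositive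

theorem PosDef.exists_trace_mul_mul_mul_eq_trace_conjTranspose_mul_self {A C D : Matrix ι ι 𝕜}
    (hA : A.PosDef) (hC : C.PosDef) (hD : D.IsHermitian) :
    ∃ Y : Matrix ι ι 𝕜, (A * D * C * D).trace = (Yᴴ * Y).trace ∧ (Y = 0 ↔ D = 0) := by
  obtain ⟨R, hR, rfl⟩ := hA.exists_isUnit_eq_conjTranspose_mul_self
  obtain ⟨Q, hQ, rfl⟩ := hC.exists_isUnit_eq_conjTranspose_mul_self
  refine ⟨Q * D * Rᴴ, ?_, ?_⟩
  · rw [conjTranspose_mul, conjTranspose_mul, conjTranspose_conjTranspose, hD.eq]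
    simp only [Matrix.mul_assoc]
    rw [trace_mul_comm Rᴴ]
    simp only [Matrix.mul_assoc]
  · rw [((isUnit_conjTranspose R).2 hR).mul_left_eq_zero, hQ.mul_right_eq_zero]

theorem PosDef.trace_mul_mul_mul_nonneg {A C D : Matrix ι ι 𝕜} (hA : A.PosDef) (hC : C.PosDef)
    (hD : D.IsHermitian) : 0 ≤ (A * D * C * D).trace := by
  obtain ⟨Y, hY, -⟩ := hA.exists_trace_mul_mul_mul_eq_trace_conjTranspose_mul_self hC hD
  exact hY ▸ (posSemidef_conjTranspose_mul_self Y).trace_nonneg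

theorem PosDef.trace_mul_mul_mul_eq_zero_iff {A C D : Matrix ι ι 𝕜} (hA : A.PosDef)
    (hC : C.PosDef) (hD : D.IsHermitian) : (A * D * C * D).trace = 0 ↔ D = 0 := by
  obtain ⟨Y, hY, hYD⟩ := hA.exists_trace_mul_mul_mul_eq_trace_conjTranspose_mul_self hC hD
  rw [hY, trace_conjTranspose_mul_self_eq_zero_iff, hYD]

theorem PosDef.two_mul_card_le_trace_inv_mul_add_trace_inv_mul {S P : Matrix ι ι 𝕜}
    (hS : S.PosDef) (hP : P.PosDef) :
    2 * (Fintype.card ι : 𝕜) ≤ (S⁻¹ * P).trace + (P⁻¹ * S).trace := by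
  rw [trace_inv_mul_add_trace_inv_mul ((isUnit_iff_isUnit_det S).mp hS.isUnit)
    ((isUnit_iff_isUnit_det P).mp hP.isUnit)]
  exact le_add_of_nonneg_right
    (hS.inv.trace_mul_mul_mul_nonneg hP.inv (hP.isHermitian.sub hS.isHermitian))

theorem PosDef.trace_inv_mul_add_trace_inv_mul_eq_two_mul_card_iff {S P : Matrix ι ι 𝕜}
    (hS : S.PosDef) (hP : P.PosDef) :
    (S⁻¹ * P).trace + (P⁻¹ * S).trace = 2 * (Fintype.card ι : 𝕜) ↔ S = P := by
  rw [trace_inv_mul_add_trace_inv_mul ((isUnit_iff_isUnit_det S).mp hS.isUnit)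
    ((isUnit_iff_isUnit_det P).mp hP.isUnit), add_eq_left,
    hS.inv.trace_mul_mul_mul_eq_zero_iff hP.inv (hP.isHermitian.sub hS.isHermitian), sub_eq_zero,
    eq_comm]

end Trace

end Matrix

section Jeffreys

variable {ι : Type*} [Fintype ι] [DecidableEq ι]

/-- The closed form of `KL(N(μ, S) ‖ N(ν, P)) + KL(N(ν, P) ‖ N(μ, S))`. -/
noncomputable def gaussianJeffreysDivergence (μ : ι → ℝ) (S : Matrix ι ι ℝ) (ν : ι → ℝ)
    (P : Matrix ι ι ℝ) : ℝ :=
  ((S⁻¹ * P).trace + (P⁻¹ * S).trace - 2 * Fintype.card ι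
    + (μ - ν) ⬝ᵥ (S⁻¹ + P⁻¹) *ᵥ (μ - ν)) / 2

variable {S P : Matrix ι ι ℝ}

theorem gaussianJeffreysDivergence_nonneg (hS : S.PosDef) (hP : P.PosDef) (μ ν : ι → ℝ) :
    0 ≤ gaussianJeffreysDivergence μ S ν P := by
  have hT := hS.two_mul_card_le_trace_inv_mul_add_trace_inv_mul hP
  have hq := (hS.inv.add hP.inv).dotProduct_mulVec_self_nonneg (μ - ν)
  unfold gaussianJeffreysDivergence
  linarith

theorem gaussianJeffreysDivergence_eq_zero_iff (hS : S.PosDef) (hP : P.PosDef) {μ ν : ι → ℝ} :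
    gaussianJeffreysDivergence μ S ν P = 0 ↔ μ = ν ∧ S = P := by
  have hT := hS.two_mul_card_le_trace_inv_mul_add_trace_inv_mul hP
  have hq := (hS.inv.add hP.inv).dotProduct_mulVec_self_nonneg (μ - ν)
  unfold gaussianJeffreysDivergence
  constructor
  · intro h
    exact ⟨sub_eq_zero.mp ((hS.inv.add hP.inv).dotProduct_mulVec_self_eq_zero_iff.mp (by linarith)),
      (hS.trace_inv_mul_add_trace_inv_mul_eq_two_mul_card_iff hP).mp (by linarith)⟩
  · rintro ⟨rfl, rfl⟩
    simp [(hS.trace_inv_mul_add_trace_inv_mul_eq_two_mul_card_iff hS).mpr rfl]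

end Jeffreys

theorem UQVAE_loss_minimized_at_true_posterior_general (n m : ℕ)
    (B : Matrix (Fin m) (Fin n) ℝ) (y μE : Fin m → ℝ) (μpr : Fin n → ℝ)
    (ΓE : Matrix (Fin m) (Fin m) ℝ) (Γpr : Matrix (Fin n) (Fin n) ℝ)
    (hΓE : ΓE.PosDef) (hΓpr : Γpr.PosDef) (α : ℝ) (hα : α = 1 / 2) :
    let Γstar : Matrix (Fin n) (Fin n) ℝ := (Bᵀ * ΓE⁻¹ * B + Γpr⁻¹)⁻¹
    let μstar : Fin n → ℝ := Γstar *ᵥ (Bᵀ *ᵥ (ΓE⁻¹ *ᵥ (y - μE)) + Γpr⁻¹ *ᵥ μpr)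
    let F : (Fin n → ℝ) → Matrix (Fin n) (Fin n) ℝ → ℝ := fun μ S =>
      ((1 - α) / α) * (Real.log S.det + (S⁻¹ * Γstar).trace
          + (μ - μstar) ⬝ᵥ (S⁻¹ *ᵥ (μ - μstar)))
        + (ΓE⁻¹ * B * S * Bᵀ).trace
        + (y - B *ᵥ μ - μE) ⬝ᵥ (ΓE⁻¹ *ᵥ (y - B *ᵥ μ - μE))
        + (Γpr⁻¹ * S).trace + (μ - μpr) ⬝ᵥ (Γpr⁻¹ *ᵥ (μ - μpr))
        + Real.log (Γpr.det / S.det)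
    (∀ (μ : Fin n → ℝ) (S : Matrix (Fin n) (Fin n) ℝ), S.PosDef →
        F μstar Γstar ≤ F μ S)
      ∧ (∀ (μ : Fin n → ℝ) (S : Matrix (Fin n) (Fin n) ℝ), S.PosDef →
          (F μ S = F μstar Γstar ↔ μ = μstar ∧ S = Γstar)) := by
  intro Γstar μstar F
  subst hα
  have hH := hΓE.inv.transpose_mul_mul_add hΓpr.inv B
  have hΓstar : Γstar.PosDef := hH.inv
  have hΓstar_inv : Γstar⁻¹ = Bᵀ * ΓE⁻¹ * B + Γpr⁻¹ :=
    nonsing_inv_nonsing_inv _ ((isUnit_iff_isUnit_det _).mp hH.isUnit)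
  have hnormal : Γstar⁻¹ *ᵥ μstar = Bᵀ *ᵥ (ΓE⁻¹ *ᵥ (y - μE)) + Γpr⁻¹ *ᵥ μpr := by
    rw [mulVec_mulVec, nonsing_inv_mul _ ((isUnit_iff_isUnit_det _).mp hΓstar.isUnit), one_mulVec]
  obtain ⟨c, hF⟩ : ∃ c, ∀ μ S, S.PosDef →
      F μ S = 2 * gaussianJeffreysDivergence μ S μstar Γstar + c := by
    refine ⟨((y - μE) - B *ᵥ μstar) ⬝ᵥ ΓE⁻¹ *ᵥ ((y - μE) - B *ᵥ μstar)
      + (μstar - μpr) ⬝ᵥ Γpr⁻¹ *ᵥ (μstar - μpr) + Real.log Γpr.det + 2 * n, fun μ S hS => ?_⟩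
    have hres := residual_add_penalty_eq_of_normal_equation
      (isHermitian_iff_isSymm.mp hΓE.inv.isHermitian)
      (isHermitian_iff_isSymm.mp hΓpr.inv.isHermitian) B (y - μE) (hΓstar_inv ▸ hnormal) μ
    have htr := trace_mul_mul_mul_transpose_add_trace_mul ΓE⁻¹ B Γpr⁻¹ S
    simp only [F, gaussianJeffreysDivergence, Fintype.card_fin, add_mulVec, dotProduct_add]
    rw [show (1 - 1 / 2 : ℝ) / (1 / 2) = 1 by norm_num, one_mul, sub_right_comm y,
      Real.log_div hΓpr.det_pos.ne' hS.det_pos.ne', hΓstar_inv]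
    linear_combination htr + hres
  have hFstar : F μstar Γstar = c := by
    simp [hF _ _ hΓstar, (gaussianJeffreysDivergence_eq_zero_iff hΓstar hΓstar).mpr ⟨rfl, rfl⟩]
  refine ⟨fun μ S hS => ?_, fun μ S hS => ?_⟩
  · linarith [hF μ S hS, gaussianJeffreysDivergence_nonneg hS hΓstar μ μstar]
  · rw [hF μ S hS, hFstar, ← gaussianJeffreysDivergence_eq_zero_iff hS hΓstar]
    simp

/-- Theorem 2 of the UQ-VAE paper (linear-Gaussian analytical result, `α = 1/2`):
the loss functional `F(μ, Σ)` attains its minimum over pairs of a mean `μ ∈ ℝⁿ` and a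
symmetric positive definite covariance `Σ` exactly at the true posterior `(μ_*, Γ_*)`. -/
theorem UQVAE_loss_minimized_at_true_posterior (n m : ℕ) (hn : 0 < n) (hm : 0 < m)
    (B : Matrix (Fin m) (Fin n) ℝ) (y μE : Fin m → ℝ) (μpr : Fin n → ℝ)
    (ΓE : Matrix (Fin m) (Fin m) ℝ) (Γpr : Matrix (Fin n) (Fin n) ℝ)
    (hΓE : ΓE.PosDef) (hΓpr : Γpr.PosDef) (α : ℝ) (hα : α = 1 / 2) :
    let Γstar : Matrix (Fin n) (Fin n) ℝ := (Bᵀ * ΓE⁻¹ * B + Γpr⁻¹)⁻¹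
    let μstar : Fin n → ℝ := Γstar *ᵥ (Bᵀ *ᵥ (ΓE⁻¹ *ᵥ (y - μE)) + Γpr⁻¹ *ᵥ μpr)
    let F : (Fin n → ℝ) → Matrix (Fin n) (Fin n) ℝ → ℝ := fun μ S =>
      ((1 - α) / α) * (Real.log S.det + (S⁻¹ * Γstar).trace
          + (μ - μstar) ⬝ᵥ (S⁻¹ *ᵥ (μ - μstar)))
        + (ΓE⁻¹ * B * S * Bᵀ).trace
        + (y - B *ᵥ μ - μE) ⬝ᵥ (ΓE⁻¹ *ᵥ (y - B *ᵥ μ - μE))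
        + (Γpr⁻¹ * S).trace + (μ - μpr) ⬝ᵥ (Γpr⁻¹ *ᵥ (μ - μpr))
        + Real.log (Γpr.det / S.det)
    (∀ (μ : Fin n → ℝ) (S : Matrix (Fin n) (Fin n) ℝ), S.PosDef →
        F μstar Γstar ≤ F μ S)
      ∧ (∀ (μ : Fin n → ℝ) (S : Matrix (Fin n) (Fin n) ℝ), S.PosDef →
          (F μ S = F μstar Γstar ↔ μ = μstar ∧ S = Γstar)) :=
  UQVAE_loss_minimized_at_true_posterior_general n m B y μE μpr ΓE Γpr hΓE hΓpr α hα
end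

section
/- Let μ ∈ ℝⁿ, Σ ∈ ℝⁿˣⁿ symmetric positive definite, and let the stationarity condition from the variation with respect to the mean hold at μ, together with the stationarity condition from the variation with respect to the Cholesky factor: −Σ⁻¹(Γ_* + (μ − μ_*)(μ − μ_*)ᵀ) + (Bᵀ Γ_E⁻¹ B + Γ_pr⁻¹) Σ = 0. Then these two conditions hold simultaneously if and only if μ = μ_* and Σ = Γ_*, where the mean stationarity condition is Σ⁻¹(μ − μ_*) − Bᵀ Γ_E⁻¹ (y − Bμ − μ_E) + Γ_pr⁻¹ (μ − μ_pr) = 0. -/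
/-!
With the posterior precision `A = Bᵀ Γ_E⁻¹ B + Γ_pr⁻¹` and `b = Bᵀ Γ_E⁻¹ (y - μ_E) + Γ_pr⁻¹ μ_pr`,
the data and prior terms of the mean condition sum to `A μ - b = A (μ - μ_*)`, so the condition reads
`(Σ⁻¹ + A)(μ - μ_*) = 0`, and `Σ⁻¹ + A` is positive definite, so it holds iff `μ = μ_*`. The
rank-one term then vanishes and the covariance condition becomes `Σ A Σ = A⁻¹`. Conjugating by
`R = A^{1/2}` turns this into `(R Σ R)² = 1`, and the only positive semidefinite square root of
`1` is `1`, so `Σ = R⁻² = A⁻¹`.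
-/

open Matrix

namespace Matrix

theorem neg_transpose_mulVec_mulVec_sub_add_mulVec_sub {ι κ α : Type*} [Fintype ι] [Fintype κ]
    [CommRing α] (B : Matrix κ ι α) (P : Matrix κ κ α) (Q : Matrix ι ι α) (y e : κ → α)
    (μ m : ι → α) :
    -(Bᵀ *ᵥ (P *ᵥ (y - B *ᵥ μ - e))) + Q *ᵥ (μ - m)
      = (Bᵀ * P * B + Q) *ᵥ μ - (Bᵀ *ᵥ (P *ᵥ (y - e)) + Q *ᵥ m) := by
  simp only [add_mulVec, mulVec_sub, ← mulVec_mulVec]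
  abel

open scoped ComplexOrder

variable {𝕜 ι : Type*} [RCLike 𝕜] [Fintype ι] [DecidableEq ι]

theorem PosDef.inv_mulVec_sub_add_mulVec_sub_eq_zero_iff {S A : Matrix ι ι 𝕜} (hS : S.PosDef)
    (hA : A.PosDef) (μ b : ι → 𝕜) :
    S⁻¹ *ᵥ (μ - A⁻¹ *ᵥ b) + (A *ᵥ μ - b) = 0 ↔ μ = A⁻¹ *ᵥ b := by
  have hAu : IsUnit A.det := (isUnit_iff_isUnit_det A).mp hA.isUnit
  have hfactor : S⁻¹ *ᵥ (μ - A⁻¹ *ᵥ b) + (A *ᵥ μ - b) = (S⁻¹ + A) *ᵥ (μ - A⁻¹ *ᵥ b) := by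
    rw [add_mulVec, mulVec_sub A, mulVec_mulVec, mul_nonsing_inv _ hAu, one_mulVec]
  rw [hfactor, ← mulVec_zero (S⁻¹ + A),
    (mulVec_injective_iff_isUnit.mpr (hS.inv.add hA).isUnit).eq_iff, sub_eq_zero]

open scoped MatrixOrder in
theorem PosSemidef.eq_inv_of_mul_mul_eq_inv {S A : Matrix ι ι 𝕜} (hS : S.PosSemidef)
    (hA : A.PosDef) (h : S * A * S = A⁻¹) : S = A⁻¹ := by
  set R := CFC.sqrt A
  have hRR : R * R = A := CFC.sqrt_mul_sqrt_self A hA.posSemidef.nonneg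
  have hR : IsUnit R.det :=
    (isUnit_iff_isUnit_det R).mp ((CFC.isUnit_sqrt_iff A hA.posSemidef.nonneg).mpr hA.isUnit)
  have hAinv : A⁻¹ = R⁻¹ * R⁻¹ := by rw [← hRR, mul_inv_rev]
  have hM : (R * S * R).PosSemidef := by
    have hRh : Rᴴ = R := (CFC.sqrt_nonneg A).posSemidef.isHermitian
    simpa only [hRh] using hS.conjTranspose_mul_mul_same R
  have hM_sq : (R * S * R) ^ 2 = 1 ^ 2 := by
    calc (R * S * R) ^ 2 = R * (S * (R * R) * S) * R := by noncomm_ring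
      _ = (R * R⁻¹) * (R⁻¹ * R) := by rw [hRR, h, hAinv]; noncomm_ring
      _ = 1 ^ 2 := by rw [mul_nonsing_inv _ hR, nonsing_inv_mul _ hR, one_pow, one_mul]
  have hM_one : R * S * R = 1 :=
    (CFC.sq_eq_sq_iff _ _ hM.nonneg PosSemidef.one.nonneg).mp hM_sq
  calc S = (R⁻¹ * R) * S * (R * R⁻¹) := by
        rw [mul_nonsing_inv _ hR, nonsing_inv_mul _ hR, one_mul, mul_one]
    _ = R⁻¹ * (R * S * R) * R⁻¹ := by noncomm_ring
    _ = A⁻¹ := by rw [hM_one, mul_one, hAinv]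

theorem PosDef.inv_mul_inv_eq_mul_iff {S A : Matrix ι ι 𝕜} (hS : S.PosDef) (hA : A.PosDef) :
    S⁻¹ * A⁻¹ = A * S ↔ S = A⁻¹ := by
  have hSu : IsUnit S.det := (isUnit_iff_isUnit_det S).mp hS.isUnit
  have hAu : IsUnit A.det := (isUnit_iff_isUnit_det A).mp hA.isUnit
  constructor
  · intro h
    refine hS.posSemidef.eq_inv_of_mul_mul_eq_inv hA ?_
    rw [mul_assoc, ← h, ← mul_assoc, mul_nonsing_inv _ hSu, one_mul]
  · rintro rfl
    rw [nonsing_inv_nonsing_inv _ hAu]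

end Matrix

theorem combined_stationarity_iff_general (n m : ℕ)
    (B : Matrix (Fin m) (Fin n) ℝ) (y μE : Fin m → ℝ) (μpr : Fin n → ℝ)
    (ΓE : Matrix (Fin m) (Fin m) ℝ) (Γpr : Matrix (Fin n) (Fin n) ℝ)
    (hΓE : ΓE.PosDef) (hΓpr : Γpr.PosDef)
    (μ : Fin n → ℝ) (S : Matrix (Fin n) (Fin n) ℝ) (hS : S.PosDef) :
    let Γstar : Matrix (Fin n) (Fin n) ℝ := (Bᵀ * ΓE⁻¹ * B + Γpr⁻¹)⁻¹
    let μstar : Fin n → ℝ := Γstar *ᵥ (Bᵀ *ᵥ (ΓE⁻¹ *ᵥ (y - μE)) + Γpr⁻¹ *ᵥ μpr)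
    ((S⁻¹ *ᵥ (μ - μstar) - Bᵀ *ᵥ (ΓE⁻¹ *ᵥ (y - B *ᵥ μ - μE)) + Γpr⁻¹ *ᵥ (μ - μpr) = 0)
        ∧ (-(S⁻¹ * (Γstar + vecMulVec (μ - μstar) (μ - μstar)))
            + (Bᵀ * ΓE⁻¹ * B + Γpr⁻¹) * S = 0))
      ↔ (μ = μstar ∧ S = Γstar) := by
  intro Γstar μstar
  have hA : (Bᵀ * ΓE⁻¹ * B + Γpr⁻¹).PosDef := by
    have hdata := hΓE.inv.posSemidef.conjTranspose_mul_mul_same B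
    rw [conjTranspose_eq_transpose_of_trivial] at hdata
    exact PosDef.posSemidef_add hdata hΓpr.inv
  have hmean : S⁻¹ *ᵥ (μ - μstar) - Bᵀ *ᵥ (ΓE⁻¹ *ᵥ (y - B *ᵥ μ - μE)) + Γpr⁻¹ *ᵥ (μ - μpr)
      = S⁻¹ *ᵥ (μ - μstar) + ((Bᵀ * ΓE⁻¹ * B + Γpr⁻¹) *ᵥ μ
          - (Bᵀ *ᵥ (ΓE⁻¹ *ᵥ (y - μE)) + Γpr⁻¹ *ᵥ μpr)) := by
    rw [← neg_transpose_mulVec_mulVec_sub_add_mulVec_sub]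
    abel
  rw [hmean, hS.inv_mulVec_sub_add_mulVec_sub_eq_zero_iff hA]
  refine and_congr_right fun hμ => ?_
  rw [hμ, sub_self, vecMulVec_zero, add_zero, neg_add_eq_zero]
  exact hS.inv_mul_inv_eq_mul_iff hA

/-- Combined stationarity conditions of the linear-Gaussian analytical result:
the mean stationarity condition together with the covariance (Cholesky factor)
stationarity condition hold simultaneously if and only if `μ = μ_*` and `Σ = Γ_*`. -/
theorem combined_stationarity_iff (n m : ℕ) (hn : 0 < n) (hm : 0 < m)
    (B : Matrix (Fin m) (Fin n) ℝ) (y μE : Fin m → ℝ) (μpr : Fin n → ℝ)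
    (ΓE : Matrix (Fin m) (Fin m) ℝ) (Γpr : Matrix (Fin n) (Fin n) ℝ)
    (hΓE : ΓE.PosDef) (hΓpr : Γpr.PosDef)
    (μ : Fin n → ℝ) (S : Matrix (Fin n) (Fin n) ℝ) (hS : S.PosDef) :
    let Γstar : Matrix (Fin n) (Fin n) ℝ := (Bᵀ * ΓE⁻¹ * B + Γpr⁻¹)⁻¹
    let μstar : Fin n → ℝ := Γstar *ᵥ (Bᵀ *ᵥ (ΓE⁻¹ *ᵥ (y - μE)) + Γpr⁻¹ *ᵥ μpr)
    ((S⁻¹ *ᵥ (μ - μstar) - Bᵀ *ᵥ (ΓE⁻¹ *ᵥ (y - B *ᵥ μ - μE)) + Γpr⁻¹ *ᵥ (μ - μpr) = 0)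
        ∧ (-(S⁻¹ * (Γstar + vecMulVec (μ - μstar) (μ - μstar)))
            + (Bᵀ * ΓE⁻¹ * B + Γpr⁻¹) * S = 0))
      ↔ (μ = μstar ∧ S = Γstar) :=
  combined_stationarity_iff_general n m B y μE μpr ΓE Γpr hΓE hΓpr μ S hS
end
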